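/- arXiv:0707.4597 — 3 statements merged into one kernel-verified Lean document; each statement's English description precedes it below -/
import Mathlib

section
/- For jointly distributed random variables X, Y_1, Y_2, W_1, W_2 on finite alphabets, if (W_1, W_2) ↔ X ↔ Y_1 ↔ Y_2 forms a Markov chain (i.e., the joint distribution factors as P(w_1,w_2|x)P(x)P(y_1|x)P(y_2|y_1)), then I(X; W_2 | Y_2) + I(X; W_1 | W_2, Y_1) = I(X; W_1, W_2 | Y_1) + I(Y_1; W_2 | Y_2). -/
open scoped BigOperators

namespace SIScalable

variable {Ω : Type*} [Fintype Ω]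

/-- Probability that a finite random variable `X` takes value `a`, under pmf `μ`. -/
noncomputable def pr (μ : Ω → ℝ) {A : Type*} [DecidableEq A] (X : Ω → A) (a : A) : ℝ :=
  ∑ ω, if X ω = a then μ ω else 0

/-- `μ` is a probability mass function. -/
def IsPMF (μ : Ω → ℝ) : Prop := (∀ ω, 0 ≤ μ ω) ∧ ∑ ω, μ ω = 1

/-- Shannon entropy (in bits) of a finite random variable. -/
noncomputable def ent (μ : Ω → ℝ) {A : Type*} [Fintype A] [DecidableEq A] (X : Ω → A) : ℝ :=
  -∑ a : A, pr μ X a * Real.logb 2 (pr μ X a)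

/-- Conditional Shannon entropy `H(X|Y)`. -/
noncomputable def condEnt (μ : Ω → ℝ) {A B : Type*} [Fintype A] [DecidableEq A]
    [Fintype B] [DecidableEq B] (X : Ω → A) (Y : Ω → B) : ℝ :=
  ent μ (fun ω => (X ω, Y ω)) - ent μ Y

/-- Conditional mutual information `I(X;Y|Z)`. -/
noncomputable def cmi (μ : Ω → ℝ) {A B C : Type*} [Fintype A] [DecidableEq A]
    [Fintype B] [DecidableEq B] [Fintype C] [DecidableEq C]
    (X : Ω → A) (Y : Ω → B) (Z : Ω → C) : ℝ :=
  ent μ (fun ω => (X ω, Z ω)) + ent μ (fun ω => (Y ω, Z ω))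
    - ent μ (fun ω => (X ω, Y ω, Z ω)) - ent μ Z

section Helpers

set_option linter.unusedSectionVars false

variable {μ : Ω → ℝ} {A B C : Type*} [Fintype A] [DecidableEq A] [Fintype B] [DecidableEq B]
  [Fintype C] [DecidableEq C]

lemma pr_nonneg (h0 : ∀ ω, 0 ≤ μ ω) (Z : Ω → A) (a : A) : 0 ≤ pr μ Z a :=
  Finset.sum_nonneg fun ω _ => by by_cases h : Z ω = a <;> simp [h, h0 ω]

lemma pr_congr {Z : Ω → A} {V : Ω → B} {a : A} {b : B}
    (h : ∀ ω, Z ω = a ↔ V ω = b) : pr μ Z a = pr μ V b :=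
  Finset.sum_congr rfl fun ω _ => by simp only [h ω]

lemma pr_le (h0 : ∀ ω, 0 ≤ μ ω) {Z : Ω → A} {V : Ω → B} {a : A} {b : B}
    (h : ∀ ω, Z ω = a → V ω = b) : pr μ Z a ≤ pr μ V b := by
  refine Finset.sum_le_sum fun ω _ => ?_
  by_cases hz : Z ω = a
  · simp [hz, h ω hz]
  · by_cases hv : V ω = b <;> simp [hz, hv, h0 ω]

lemma pr_eq_zero (h0 : ∀ ω, 0 ≤ μ ω) {Z : Ω → A} {V : Ω → B} {a : A} {b : B}
    (h : ∀ ω, Z ω = a → V ω = b) (hv : pr μ V b = 0) : pr μ Z a = 0 :=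
  le_antisymm (hv ▸ pr_le h0 h) (pr_nonneg h0 Z a)

lemma pr_sum_fst (Z : Ω → A) (V : Ω → B) (b : B) :
    ∑ a : A, pr μ (fun ω => (Z ω, V ω)) (a, b) = pr μ V b := by
  classical
  unfold pr
  rw [Finset.sum_comm]
  refine Finset.sum_congr rfl fun ω _ => ?_
  by_cases h : V ω = b
  · simp only [Prod.mk.injEq, h, and_true, if_pos]
    simp
  · rw [if_neg h]
    refine Finset.sum_eq_zero fun a _ => ?_
    rw [if_neg]
    simp only [Prod.mk.injEq]
    tauto

lemma pr_sum_snd (Z : Ω → A) (V : Ω → B) (a : A) :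
    ∑ b : B, pr μ (fun ω => (Z ω, V ω)) (a, b) = pr μ Z a := by
  classical
  unfold pr
  rw [Finset.sum_comm]
  refine Finset.sum_congr rfl fun ω _ => ?_
  by_cases h : Z ω = a
  · simp only [Prod.mk.injEq, h, true_and, if_pos]
    simp
  · rw [if_neg h]
    refine Finset.sum_eq_zero fun b _ => ?_
    rw [if_neg]
    simp only [Prod.mk.injEq]
    tauto

lemma pr_sum_mid (Z : Ω → A) (V : Ω → B) (U : Ω → C) (a : A) (c : C) :
    ∑ b : B, pr μ (fun ω => (Z ω, V ω, U ω)) (a, b, c) = pr μ (fun ω => (Z ω, U ω)) (a, c) := by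
  classical
  unfold pr
  rw [Finset.sum_comm]
  refine Finset.sum_congr rfl fun ω _ => ?_
  by_cases h : Z ω = a ∧ U ω = c
  · simp only [Prod.mk.injEq, h.1, h.2, true_and, and_true, if_pos]
    simp
  · have hne : ¬ (Z ω, U ω) = (a, c) := by simp only [Prod.mk.injEq]; exact h
    rw [if_neg hne]
    refine Finset.sum_eq_zero fun b _ => ?_
    rw [if_neg]
    simp only [Prod.mk.injEq]
    tauto

lemma pr_sum3_fst (Z : Ω → A) (V : Ω → B) (U : Ω → C) (b : B) (c : C) :
    ∑ a : A, pr μ (fun ω => (Z ω, V ω, U ω)) (a, b, c)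
      = pr μ (fun ω => (V ω, U ω)) (b, c) :=
  pr_sum_fst Z (fun ω => (V ω, U ω)) (b, c)

lemma pr_sum3_snd (Z : Ω → A) (V : Ω → B) (U : Ω → C) (a : A) (b : B) :
    ∑ c : C, pr μ (fun ω => (Z ω, V ω, U ω)) (a, b, c)
      = pr μ (fun ω => (Z ω, V ω)) (a, b) := by
  classical
  unfold pr
  rw [Finset.sum_comm]
  refine Finset.sum_congr rfl fun ω _ => ?_
  by_cases h : Z ω = a ∧ V ω = b
  · simp only [Prod.mk.injEq, h.1, h.2, true_and, if_pos, and_true]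
    simp
  · have hne : ¬ (Z ω, V ω) = (a, b) := by simp only [Prod.mk.injEq]; exact h
    rw [if_neg hne]
    refine Finset.sum_eq_zero fun c _ => ?_
    rw [if_neg]
    simp only [Prod.mk.injEq]
    tauto

lemma ent_comp {A B : Type*} [Fintype A] [DecidableEq A] [Fintype B] [DecidableEq B]
    (μ : Ω → ℝ) (f : A → B) (hf : Function.Injective f) (Z : Ω → A) :
    ent μ (fun ω => f (Z ω)) = ent μ Z := by
  classical
  unfold ent
  congr 1
  have hpr : ∀ a : A, pr μ (fun ω => f (Z ω)) (f a) = pr μ Z a := fun a =>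
    pr_congr fun ω => by simp [hf.eq_iff]
  have h0 : ∀ b ∈ Finset.univ \ Finset.image f Finset.univ,
      pr μ (fun ω => f (Z ω)) b * Real.logb 2 (pr μ (fun ω => f (Z ω)) b) = 0 := by
    intro b hb
    simp only [Finset.mem_sdiff, Finset.mem_image] at hb
    have : pr μ (fun ω => f (Z ω)) b = 0 := by
      refine Finset.sum_eq_zero fun ω _ => ?_
      have : f (Z ω) ≠ b := fun h => hb.2 ⟨Z ω, Finset.mem_univ _, h⟩
      simp [this]
    simp [this]
  rw [← Finset.sum_subset (Finset.subset_univ (Finset.image f Finset.univ))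
        (by intro b _ hb; exact h0 b (Finset.mem_sdiff.mpr ⟨Finset.mem_univ _, hb⟩)),
      Finset.sum_image (fun a _ a' _ h => hf h)]
  exact Finset.sum_congr rfl fun a _ => by rw [hpr a]

lemma ent_markov (μ : Ω → ℝ) (h0 : ∀ ω, 0 ≤ μ ω)
    (X : Ω → A) (Y : Ω → B) (Z : Ω → C)
    (h : ∀ a b c, pr μ (fun ω => (X ω, Y ω, Z ω)) (a, b, c) * pr μ Y b
        = pr μ (fun ω => (X ω, Y ω)) (a, b) * pr μ (fun ω => (Y ω, Z ω)) (b, c)) :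
    ent μ (fun ω => (X ω, Y ω, Z ω))
      = ent μ (fun ω => (X ω, Y ω)) + ent μ (fun ω => (Y ω, Z ω)) - ent μ Y := by
  classical
  set t := pr μ (fun ω => (X ω, Y ω, Z ω)) with ht
  set pXY := pr μ (fun ω => (X ω, Y ω)) with hpXY
  set pYZ := pr μ (fun ω => (Y ω, Z ω)) with hpYZ
  set pY := pr μ Y with hpY
  have key : ∀ (a : A) (b : B) (c : C), t (a, b, c) * Real.logb 2 (t (a, b, c))
      = t (a, b, c) * Real.logb 2 (pXY (a, b)) + t (a, b, c) * Real.logb 2 (pYZ (b, c))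
        - t (a, b, c) * Real.logb 2 (pY b) := by
    intro a b c
    rcases eq_or_lt_of_le (pr_nonneg h0 (fun ω => (X ω, Y ω, Z ω)) (a, b, c)) with h1 | h1
    · rw [← ht] at h1; rw [← h1]; ring
    · rw [← ht] at h1
      have hxy : 0 < pXY (a, b) := lt_of_lt_of_le h1 (pr_le h0 fun ω hw => by
        simp only [Prod.mk.injEq] at hw ⊢; exact ⟨hw.1, hw.2.1⟩)
      have hyz : 0 < pYZ (b, c) := lt_of_lt_of_le h1 (pr_le h0 fun ω hw => by
        simp only [Prod.mk.injEq] at hw ⊢; exact ⟨hw.2.1, hw.2.2⟩)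
      have hy : 0 < pY b := lt_of_lt_of_le h1 (pr_le h0 fun ω hw => by
        simp only [Prod.mk.injEq] at hw; exact hw.2.1)
      have heq : t (a, b, c) = pXY (a, b) * pYZ (b, c) / pY b := by
        field_simp
        exact h a b c
      rw [heq, Real.logb_div (by positivity) (ne_of_gt hy),
          Real.logb_mul (ne_of_gt hxy) (ne_of_gt hyz)]
      ring
  have sumc : ∀ a b, ∑ c, t (a, b, c) = pXY (a, b) := fun a b => pr_sum3_snd X Y Z a b
  have suma : ∀ b c, ∑ a, t (a, b, c) = pYZ (b, c) := fun b c => pr_sum3_fst X Y Z b c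
  have sumb : ∀ b, ∑ a, pXY (a, b) = pY b := fun b => pr_sum_fst X Y b
  unfold ent
  rw [← ht, ← hpXY, ← hpYZ, ← hpY]
  rw [Fintype.sum_prod_type]
  simp_rw [Fintype.sum_prod_type]
  simp_rw [key]
  simp_rw [Finset.sum_sub_distrib, Finset.sum_add_distrib]
  have e1 : ∑ a, ∑ b, ∑ c, t (a, b, c) * Real.logb 2 (pXY (a, b))
      = ∑ a, ∑ b, pXY (a, b) * Real.logb 2 (pXY (a, b)) := by
    refine Finset.sum_congr rfl fun a _ => Finset.sum_congr rfl fun b _ => ?_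
    rw [← Finset.sum_mul, sumc]
  have e2 : ∑ a, ∑ b, ∑ c, t (a, b, c) * Real.logb 2 (pYZ (b, c))
      = ∑ b, ∑ c, pYZ (b, c) * Real.logb 2 (pYZ (b, c)) := by
    rw [Finset.sum_comm]
    refine Finset.sum_congr rfl fun b _ => ?_
    rw [Finset.sum_comm]
    refine Finset.sum_congr rfl fun c _ => ?_
    rw [← Finset.sum_mul, suma]
  have e3 : ∑ a, ∑ b, ∑ c, t (a, b, c) * Real.logb 2 (pY b)
      = ∑ b, pY b * Real.logb 2 (pY b) := by
    rw [Finset.sum_comm]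
    refine Finset.sum_congr rfl fun b _ => ?_
    have : ∀ a, ∑ c, t (a, b, c) * Real.logb 2 (pY b) = pXY (a, b) * Real.logb 2 (pY b) := by
      intro a; rw [← Finset.sum_mul, sumc]
    simp_rw [this]
    rw [← Finset.sum_mul, sumb]
  rw [e1, e2, e3]
  ring

end Helpers

/-- Under the Markov chain (W₁,W₂) ↔ X ↔ Y₁ ↔ Y₂,
I(X;W₂|Y₂) + I(X;W₁|W₂,Y₁) = I(X;W₁,W₂|Y₁) + I(Y₁;W₂|Y₂). -/
theorem sum_rate_identity
    {Ω 𝒳 𝒴₁ 𝒴₂ 𝒲₁ 𝒲₂ : Type*} [Fintype Ω]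
    [Fintype 𝒳] [DecidableEq 𝒳] [Fintype 𝒴₁] [DecidableEq 𝒴₁]
    [Fintype 𝒴₂] [DecidableEq 𝒴₂] [Fintype 𝒲₁] [DecidableEq 𝒲₁]
    [Fintype 𝒲₂] [DecidableEq 𝒲₂]
    (μ : Ω → ℝ) (hμ : IsPMF μ)
    (X : Ω → 𝒳) (Y₁ : Ω → 𝒴₁) (Y₂ : Ω → 𝒴₂) (W₁ : Ω → 𝒲₁) (W₂ : Ω → 𝒲₂)
    (hMarkov : ∀ (w₁ : 𝒲₁) (w₂ : 𝒲₂) (x : 𝒳) (y₁ : 𝒴₁) (y₂ : 𝒴₂),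
      pr μ (fun ω => (W₁ ω, W₂ ω, X ω, Y₁ ω, Y₂ ω)) (w₁, w₂, x, y₁, y₂)
          * pr μ X x * pr μ Y₁ y₁
        = pr μ (fun ω => (W₁ ω, W₂ ω, X ω)) (w₁, w₂, x)
          * pr μ (fun ω => (X ω, Y₁ ω)) (x, y₁)
          * pr μ (fun ω => (Y₁ ω, Y₂ ω)) (y₁, y₂)) :
    cmi μ X W₂ Y₂ + cmi μ X W₁ (fun ω => (W₂ ω, Y₁ ω))
      = cmi μ X (fun ω => (W₁ ω, W₂ ω)) Y₁ + cmi μ Y₁ W₂ Y₂ := by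
  classical
  obtain ⟨h0, -⟩ := hμ
  -- Step 1: marginalize W₁ out of the Markov condition.
  have hB1 : ∀ (w₂ : 𝒲₂) (x : 𝒳) (y₁ : 𝒴₁) (y₂ : 𝒴₂),
      pr μ (fun ω => (W₂ ω, X ω, Y₁ ω, Y₂ ω)) (w₂, x, y₁, y₂) * pr μ X x * pr μ Y₁ y₁
        = pr μ (fun ω => (W₂ ω, X ω)) (w₂, x) * pr μ (fun ω => (X ω, Y₁ ω)) (x, y₁)
          * pr μ (fun ω => (Y₁ ω, Y₂ ω)) (y₁, y₂) := by
    intro w₂ x y₁ y₂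
    have e1 : ∑ w₁, pr μ (fun ω => (W₁ ω, W₂ ω, X ω, Y₁ ω, Y₂ ω)) (w₁, w₂, x, y₁, y₂)
        = pr μ (fun ω => (W₂ ω, X ω, Y₁ ω, Y₂ ω)) (w₂, x, y₁, y₂) :=
      pr_sum_fst W₁ (fun ω => (W₂ ω, X ω, Y₁ ω, Y₂ ω)) (w₂, x, y₁, y₂)
    have e2 : ∑ w₁, pr μ (fun ω => (W₁ ω, W₂ ω, X ω)) (w₁, w₂, x)
        = pr μ (fun ω => (W₂ ω, X ω)) (w₂, x) :=
      pr_sum_fst W₁ (fun ω => (W₂ ω, X ω)) (w₂, x)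
    calc pr μ (fun ω => (W₂ ω, X ω, Y₁ ω, Y₂ ω)) (w₂, x, y₁, y₂) * pr μ X x * pr μ Y₁ y₁
        = (∑ w₁, pr μ (fun ω => (W₁ ω, W₂ ω, X ω, Y₁ ω, Y₂ ω)) (w₁, w₂, x, y₁, y₂))
            * pr μ X x * pr μ Y₁ y₁ := by rw [e1]
      _ = ∑ w₁, pr μ (fun ω => (W₁ ω, W₂ ω, X ω, Y₁ ω, Y₂ ω)) (w₁, w₂, x, y₁, y₂)
            * pr μ X x * pr μ Y₁ y₁ := by rw [Finset.sum_mul, Finset.sum_mul]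
      _ = ∑ w₁, pr μ (fun ω => (W₁ ω, W₂ ω, X ω)) (w₁, w₂, x)
            * pr μ (fun ω => (X ω, Y₁ ω)) (x, y₁) * pr μ (fun ω => (Y₁ ω, Y₂ ω)) (y₁, y₂) :=
          Finset.sum_congr rfl fun w₁ _ => hMarkov w₁ w₂ x y₁ y₂
      _ = (∑ w₁, pr μ (fun ω => (W₁ ω, W₂ ω, X ω)) (w₁, w₂, x))
            * pr μ (fun ω => (X ω, Y₁ ω)) (x, y₁) * pr μ (fun ω => (Y₁ ω, Y₂ ω)) (y₁, y₂) := by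
          rw [Finset.sum_mul, Finset.sum_mul]
      _ = _ := by rw [e2]
  -- Step 2: Markov chain X — Y₁ — Y₂.
  have hXchain : ∀ (x : 𝒳) (y₁ : 𝒴₁) (y₂ : 𝒴₂),
      pr μ (fun ω => (X ω, Y₁ ω, Y₂ ω)) (x, y₁, y₂) * pr μ Y₁ y₁
        = pr μ (fun ω => (X ω, Y₁ ω)) (x, y₁) * pr μ (fun ω => (Y₁ ω, Y₂ ω)) (y₁, y₂) := by
    intro x y₁ y₂
    have e1 : ∑ w₂, pr μ (fun ω => (W₂ ω, X ω, Y₁ ω, Y₂ ω)) (w₂, x, y₁, y₂)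
        = pr μ (fun ω => (X ω, Y₁ ω, Y₂ ω)) (x, y₁, y₂) :=
      pr_sum_fst W₂ (fun ω => (X ω, Y₁ ω, Y₂ ω)) (x, y₁, y₂)
    have e2 : ∑ w₂, pr μ (fun ω => (W₂ ω, X ω)) (w₂, x) = pr μ X x := pr_sum_fst W₂ X x
    have hs : pr μ (fun ω => (X ω, Y₁ ω, Y₂ ω)) (x, y₁, y₂) * pr μ X x * pr μ Y₁ y₁
        = pr μ X x * pr μ (fun ω => (X ω, Y₁ ω)) (x, y₁)
          * pr μ (fun ω => (Y₁ ω, Y₂ ω)) (y₁, y₂) := by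
      calc pr μ (fun ω => (X ω, Y₁ ω, Y₂ ω)) (x, y₁, y₂) * pr μ X x * pr μ Y₁ y₁
          = (∑ w₂, pr μ (fun ω => (W₂ ω, X ω, Y₁ ω, Y₂ ω)) (w₂, x, y₁, y₂))
              * pr μ X x * pr μ Y₁ y₁ := by rw [e1]
        _ = ∑ w₂, pr μ (fun ω => (W₂ ω, X ω, Y₁ ω, Y₂ ω)) (w₂, x, y₁, y₂)
              * pr μ X x * pr μ Y₁ y₁ := by rw [Finset.sum_mul, Finset.sum_mul]
        _ = ∑ w₂, pr μ (fun ω => (W₂ ω, X ω)) (w₂, x) * pr μ (fun ω => (X ω, Y₁ ω)) (x, y₁)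
              * pr μ (fun ω => (Y₁ ω, Y₂ ω)) (y₁, y₂) :=
            Finset.sum_congr rfl fun w₂ _ => hB1 w₂ x y₁ y₂
        _ = (∑ w₂, pr μ (fun ω => (W₂ ω, X ω)) (w₂, x)) * pr μ (fun ω => (X ω, Y₁ ω)) (x, y₁)
              * pr μ (fun ω => (Y₁ ω, Y₂ ω)) (y₁, y₂) := by rw [Finset.sum_mul, Finset.sum_mul]
        _ = _ := by rw [e2]
    by_cases hx : pr μ X x = 0
    · have z1 : pr μ (fun ω => (X ω, Y₁ ω, Y₂ ω)) (x, y₁, y₂) = 0 :=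
        pr_eq_zero h0 (fun ω hw => by simp only [Prod.mk.injEq] at hw; exact hw.1) hx
      have z2 : pr μ (fun ω => (X ω, Y₁ ω)) (x, y₁) = 0 :=
        pr_eq_zero h0 (fun ω hw => by simp only [Prod.mk.injEq] at hw; exact hw.1) hx
      rw [z1, z2]; ring
    · exact mul_right_cancel₀ hx (by linear_combination hs)
  -- Step 3: Markov chain W₂ — X — Y₁.
  have hI3 : ∀ (w₂ : 𝒲₂) (x : 𝒳) (y₁ : 𝒴₁),
      pr μ (fun ω => (W₂ ω, X ω, Y₁ ω)) (w₂, x, y₁) * pr μ X x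
        = pr μ (fun ω => (W₂ ω, X ω)) (w₂, x) * pr μ (fun ω => (X ω, Y₁ ω)) (x, y₁) := by
    intro w₂ x y₁
    have e1 : ∑ y₂, pr μ (fun ω => (W₂ ω, X ω, Y₁ ω, Y₂ ω)) (w₂, x, y₁, y₂)
        = pr μ (fun ω => (W₂ ω, X ω, Y₁ ω)) (w₂, x, y₁) := by
      have hc : ∀ y₂ : 𝒴₂, pr μ (fun ω => (W₂ ω, X ω, Y₁ ω, Y₂ ω)) (w₂, x, y₁, y₂)
          = pr μ (fun ω => ((W₂ ω, X ω, Y₁ ω), Y₂ ω)) ((w₂, x, y₁), y₂) := fun y₂ =>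
        pr_congr fun ω => by simp only [Prod.mk.injEq]; tauto
      simp_rw [hc]
      exact pr_sum_snd (fun ω => (W₂ ω, X ω, Y₁ ω)) Y₂ (w₂, x, y₁)
    have e2 : ∑ y₂, pr μ (fun ω => (Y₁ ω, Y₂ ω)) (y₁, y₂) = pr μ Y₁ y₁ := pr_sum_snd Y₁ Y₂ y₁
    have hs : pr μ (fun ω => (W₂ ω, X ω, Y₁ ω)) (w₂, x, y₁) * pr μ X x * pr μ Y₁ y₁
        = pr μ (fun ω => (W₂ ω, X ω)) (w₂, x) * pr μ (fun ω => (X ω, Y₁ ω)) (x, y₁)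
          * pr μ Y₁ y₁ := by
      calc pr μ (fun ω => (W₂ ω, X ω, Y₁ ω)) (w₂, x, y₁) * pr μ X x * pr μ Y₁ y₁
          = (∑ y₂, pr μ (fun ω => (W₂ ω, X ω, Y₁ ω, Y₂ ω)) (w₂, x, y₁, y₂))
              * pr μ X x * pr μ Y₁ y₁ := by rw [e1]
        _ = ∑ y₂, pr μ (fun ω => (W₂ ω, X ω, Y₁ ω, Y₂ ω)) (w₂, x, y₁, y₂)
              * pr μ X x * pr μ Y₁ y₁ := by rw [Finset.sum_mul, Finset.sum_mul]
        _ = ∑ y₂, pr μ (fun ω => (W₂ ω, X ω)) (w₂, x) * pr μ (fun ω => (X ω, Y₁ ω)) (x, y₁)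
              * pr μ (fun ω => (Y₁ ω, Y₂ ω)) (y₁, y₂) :=
            Finset.sum_congr rfl fun y₂ _ => hB1 w₂ x y₁ y₂
        _ = pr μ (fun ω => (W₂ ω, X ω)) (w₂, x) * pr μ (fun ω => (X ω, Y₁ ω)) (x, y₁)
              * ∑ y₂, pr μ (fun ω => (Y₁ ω, Y₂ ω)) (y₁, y₂) := by rw [Finset.mul_sum]
        _ = _ := by rw [e2]
    by_cases hy : pr μ Y₁ y₁ = 0
    · have z1 : pr μ (fun ω => (W₂ ω, X ω, Y₁ ω)) (w₂, x, y₁) = 0 :=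
        pr_eq_zero h0 (fun ω hw => by simp only [Prod.mk.injEq] at hw; exact hw.2.2) hy
      have z2 : pr μ (fun ω => (X ω, Y₁ ω)) (x, y₁) = 0 :=
        pr_eq_zero h0 (fun ω hw => by simp only [Prod.mk.injEq] at hw; exact hw.2) hy
      rw [z1, z2]; ring
    · exact mul_right_cancel₀ hy (by linear_combination hs)
  -- Step 4: Markov chain W₂ — X — Y₂ (pointwise, then marginalize Y₁).
  have hptI1 : ∀ (w₂ : 𝒲₂) (x : 𝒳) (y₁ : 𝒴₁) (y₂ : 𝒴₂),
      pr μ (fun ω => (W₂ ω, X ω, Y₁ ω, Y₂ ω)) (w₂, x, y₁, y₂) * pr μ X x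
        = pr μ (fun ω => (W₂ ω, X ω)) (w₂, x)
          * pr μ (fun ω => (X ω, Y₁ ω, Y₂ ω)) (x, y₁, y₂) := by
    intro w₂ x y₁ y₂
    by_cases hy : pr μ Y₁ y₁ = 0
    · have z1 : pr μ (fun ω => (W₂ ω, X ω, Y₁ ω, Y₂ ω)) (w₂, x, y₁, y₂) = 0 :=
        pr_eq_zero h0 (fun ω hw => by simp only [Prod.mk.injEq] at hw; exact hw.2.2.1) hy
      have z2 : pr μ (fun ω => (X ω, Y₁ ω, Y₂ ω)) (x, y₁, y₂) = 0 :=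
        pr_eq_zero h0 (fun ω hw => by simp only [Prod.mk.injEq] at hw; exact hw.2.1) hy
      rw [z1, z2]; ring
    · refine mul_right_cancel₀ hy ?_
      linear_combination hB1 w₂ x y₁ y₂
        - pr μ (fun ω => (W₂ ω, X ω)) (w₂, x) * hXchain x y₁ y₂
  have hI1 : ∀ (w₂ : 𝒲₂) (x : 𝒳) (y₂ : 𝒴₂),
      pr μ (fun ω => (W₂ ω, X ω, Y₂ ω)) (w₂, x, y₂) * pr μ X x
        = pr μ (fun ω => (W₂ ω, X ω)) (w₂, x) * pr μ (fun ω => (X ω, Y₂ ω)) (x, y₂) := by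
    intro w₂ x y₂
    have e1 : ∑ y₁, pr μ (fun ω => (W₂ ω, X ω, Y₁ ω, Y₂ ω)) (w₂, x, y₁, y₂)
        = pr μ (fun ω => (W₂ ω, X ω, Y₂ ω)) (w₂, x, y₂) := by
      have hc : ∀ y₁ : 𝒴₁, pr μ (fun ω => (W₂ ω, X ω, Y₁ ω, Y₂ ω)) (w₂, x, y₁, y₂)
          = pr μ (fun ω => ((W₂ ω, X ω), Y₁ ω, Y₂ ω)) ((w₂, x), y₁, y₂) := fun y₁ =>
        pr_congr fun ω => by simp only [Prod.mk.injEq]; tauto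
      simp_rw [hc]
      rw [pr_sum_mid (fun ω => (W₂ ω, X ω)) Y₁ Y₂ (w₂, x) y₂]
      exact pr_congr fun ω => by simp only [Prod.mk.injEq]; tauto
    have e2 : ∑ y₁, pr μ (fun ω => (X ω, Y₁ ω, Y₂ ω)) (x, y₁, y₂)
        = pr μ (fun ω => (X ω, Y₂ ω)) (x, y₂) := pr_sum_mid X Y₁ Y₂ x y₂
    calc pr μ (fun ω => (W₂ ω, X ω, Y₂ ω)) (w₂, x, y₂) * pr μ X x
        = (∑ y₁, pr μ (fun ω => (W₂ ω, X ω, Y₁ ω, Y₂ ω)) (w₂, x, y₁, y₂)) * pr μ X x := by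
          rw [e1]
      _ = ∑ y₁, pr μ (fun ω => (W₂ ω, X ω, Y₁ ω, Y₂ ω)) (w₂, x, y₁, y₂) * pr μ X x := by
          rw [Finset.sum_mul]
      _ = ∑ y₁, pr μ (fun ω => (W₂ ω, X ω)) (w₂, x)
            * pr μ (fun ω => (X ω, Y₁ ω, Y₂ ω)) (x, y₁, y₂) :=
          Finset.sum_congr rfl fun y₁ _ => hptI1 w₂ x y₁ y₂
      _ = pr μ (fun ω => (W₂ ω, X ω)) (w₂, x)
            * ∑ y₁, pr μ (fun ω => (X ω, Y₁ ω, Y₂ ω)) (x, y₁, y₂) := by rw [Finset.mul_sum]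
      _ = _ := by rw [e2]
  -- Step 5: Markov chain W₂ — Y₁ — Y₂ (pointwise in x, then marginalize X).
  have hptI2 : ∀ (w₂ : 𝒲₂) (x : 𝒳) (y₁ : 𝒴₁) (y₂ : 𝒴₂),
      pr μ (fun ω => (W₂ ω, X ω, Y₁ ω, Y₂ ω)) (w₂, x, y₁, y₂) * pr μ Y₁ y₁
        = pr μ (fun ω => (W₂ ω, X ω, Y₁ ω)) (w₂, x, y₁)
          * pr μ (fun ω => (Y₁ ω, Y₂ ω)) (y₁, y₂) := by
    intro w₂ x y₁ y₂
    by_cases hx : pr μ X x = 0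
    · have z1 : pr μ (fun ω => (W₂ ω, X ω, Y₁ ω, Y₂ ω)) (w₂, x, y₁, y₂) = 0 :=
        pr_eq_zero h0 (fun ω hw => by simp only [Prod.mk.injEq] at hw; exact hw.2.1) hx
      have z2 : pr μ (fun ω => (W₂ ω, X ω, Y₁ ω)) (w₂, x, y₁) = 0 :=
        pr_eq_zero h0 (fun ω hw => by simp only [Prod.mk.injEq] at hw; exact hw.2.1) hx
      rw [z1, z2]; ring
    · refine mul_right_cancel₀ hx ?_
      linear_combination hB1 w₂ x y₁ y₂
        - pr μ (fun ω => (Y₁ ω, Y₂ ω)) (y₁, y₂) * hI3 w₂ x y₁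
  have hI2 : ∀ (w₂ : 𝒲₂) (y₁ : 𝒴₁) (y₂ : 𝒴₂),
      pr μ (fun ω => (W₂ ω, Y₁ ω, Y₂ ω)) (w₂, y₁, y₂) * pr μ Y₁ y₁
        = pr μ (fun ω => (W₂ ω, Y₁ ω)) (w₂, y₁) * pr μ (fun ω => (Y₁ ω, Y₂ ω)) (y₁, y₂) := by
    intro w₂ y₁ y₂
    have e1 : ∑ x, pr μ (fun ω => (W₂ ω, X ω, Y₁ ω, Y₂ ω)) (w₂, x, y₁, y₂)
        = pr μ (fun ω => (W₂ ω, Y₁ ω, Y₂ ω)) (w₂, y₁, y₂) :=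
      pr_sum_mid W₂ X (fun ω => (Y₁ ω, Y₂ ω)) w₂ (y₁, y₂)
    have e2 : ∑ x, pr μ (fun ω => (W₂ ω, X ω, Y₁ ω)) (w₂, x, y₁)
        = pr μ (fun ω => (W₂ ω, Y₁ ω)) (w₂, y₁) := pr_sum_mid W₂ X Y₁ w₂ y₁
    calc pr μ (fun ω => (W₂ ω, Y₁ ω, Y₂ ω)) (w₂, y₁, y₂) * pr μ Y₁ y₁
        = (∑ x, pr μ (fun ω => (W₂ ω, X ω, Y₁ ω, Y₂ ω)) (w₂, x, y₁, y₂)) * pr μ Y₁ y₁ := by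
          rw [e1]
      _ = ∑ x, pr μ (fun ω => (W₂ ω, X ω, Y₁ ω, Y₂ ω)) (w₂, x, y₁, y₂) * pr μ Y₁ y₁ := by
          rw [Finset.sum_mul]
      _ = ∑ x, pr μ (fun ω => (W₂ ω, X ω, Y₁ ω)) (w₂, x, y₁)
            * pr μ (fun ω => (Y₁ ω, Y₂ ω)) (y₁, y₂) :=
          Finset.sum_congr rfl fun x _ => hptI2 w₂ x y₁ y₂
      _ = (∑ x, pr μ (fun ω => (W₂ ω, X ω, Y₁ ω)) (w₂, x, y₁))
            * pr μ (fun ω => (Y₁ ω, Y₂ ω)) (y₁, y₂) := by rw [Finset.sum_mul]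
      _ = _ := by rw [e2]
  -- entropy decompositions
  have EM1 := ent_markov μ h0 W₂ X Y₂ hI1
  have EM2 := ent_markov μ h0 W₂ X Y₁ hI3
  have EM3 := ent_markov μ h0 W₂ Y₁ Y₂ hI2
  -- relabelings
  have hR3 : ent μ (fun ω => (X ω, W₂ ω, Y₂ ω)) = ent μ (fun ω => (W₂ ω, X ω, Y₂ ω)) := by
    have := ent_comp μ (fun p : 𝒲₂ × 𝒳 × 𝒴₂ => (p.2.1, p.1, p.2.2))
      (fun p q h => by
        obtain ⟨p1, p2, p3⟩ := p; obtain ⟨q1, q2, q3⟩ := q; simp_all [Prod.ext_iff])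
      (fun ω => (W₂ ω, X ω, Y₂ ω))
    simpa using this
  have hR5 : ent μ (fun ω => (X ω, W₂ ω, Y₁ ω)) = ent μ (fun ω => (W₂ ω, X ω, Y₁ ω)) := by
    have := ent_comp μ (fun p : 𝒲₂ × 𝒳 × 𝒴₁ => (p.2.1, p.1, p.2.2))
      (fun p q h => by
        obtain ⟨p1, p2, p3⟩ := p; obtain ⟨q1, q2, q3⟩ := q; simp_all [Prod.ext_iff])
      (fun ω => (W₂ ω, X ω, Y₁ ω))
    simpa using this
  have hR8 : ent μ (fun ω => (Y₁ ω, W₂ ω, Y₂ ω)) = ent μ (fun ω => (W₂ ω, Y₁ ω, Y₂ ω)) := by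
    have := ent_comp μ (fun p : 𝒲₂ × 𝒴₁ × 𝒴₂ => (p.2.1, p.1, p.2.2))
      (fun p q h => by
        obtain ⟨p1, p2, p3⟩ := p; obtain ⟨q1, q2, q3⟩ := q; simp_all [Prod.ext_iff])
      (fun ω => (W₂ ω, Y₁ ω, Y₂ ω))
    simpa using this
  have hR6 : ent μ (fun ω => (W₁ ω, W₂ ω, Y₁ ω)) = ent μ (fun ω => ((W₁ ω, W₂ ω), Y₁ ω)) := by
    have := ent_comp μ (fun p : 𝒲₁ × 𝒲₂ × 𝒴₁ => ((p.1, p.2.1), p.2.2))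
      (fun p q h => by
        obtain ⟨p1, p2, p3⟩ := p; obtain ⟨q1, q2, q3⟩ := q; simp_all [Prod.ext_iff])
      (fun ω => (W₁ ω, W₂ ω, Y₁ ω))
    simpa using this.symm
  have hR7 : ent μ (fun ω => (X ω, W₁ ω, W₂ ω, Y₁ ω))
      = ent μ (fun ω => (X ω, (W₁ ω, W₂ ω), Y₁ ω)) := by
    have := ent_comp μ (fun p : 𝒳 × 𝒲₁ × 𝒲₂ × 𝒴₁ => (p.1, (p.2.1, p.2.2.1), p.2.2.2))
      (fun p q h => by
        obtain ⟨p1, p2, p3, p4⟩ := p; obtain ⟨q1, q2, q3, q4⟩ := q; simp_all [Prod.ext_iff])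
      (fun ω => (X ω, W₁ ω, W₂ ω, Y₁ ω))
    simpa using this.symm
  simp only [cmi]
  linarith [hR3.trans EM1, hR5.trans EM2, hR8.trans EM3, hR6, hR7]

end SIScalable
end

section
/- Define the binary convolution u*v = u(1−v) + v(1−u) for u, v ∈ [0,1], and G(u) = h_b(p*u) − h_b(u) where h_b is the binary entropy function and 0 < p < 1/2. Then for any 0 ≤ D_1 ≤ D_2 ≤ 1/2, it holds that 1 − h_b(D_2 * p) + h_b(p * D_1) − h_b(D_1) ≥ 1 − h_b(D_2); that is, G(D_1) ≥ h_b(p*D_2) − h_b(D_2) = G(D_2) whenever D_1 ≤ D_2 ≤ 1/2. -/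
/-! On `(0, 1/2)` the derivative of `G` is `(1 - 2p) ℓ(p*u) - ℓ(u)`, where `ℓ t = log (1 - t) - log t`
is the derivative of the binary entropy. Since `u ≤ p*u ≤ 1/2` and `ℓ` is decreasing and
nonnegative on `(0, 1/2]`, this is at most `ℓ(p*u) - ℓ(u) ≤ 0`. -/

/-- Binary entropy function. -/
noncomputable def binEnt (u : ℝ) : ℝ := -u * Real.log u - (1 - u) * Real.log (1 - u)

/-- Binary convolution. -/
def binConv (u v : ℝ) : ℝ := u * (1 - v) + v * (1 - u)

open Real Set

lemma binEnt_eq_binEntropy : binEnt = binEntropy := by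
  ext u
  simp only [binEnt, binEntropy, log_inv]
  ring

lemma binConv_comm (u v : ℝ) : binConv u v = binConv v u := by
  unfold binConv; ring

lemma binConv_eq (p u : ℝ) : binConv p u = p + (1 - 2 * p) * u := by
  unfold binConv; ring

lemma continuous_binConv (p : ℝ) : Continuous (binConv p) := by
  unfold binConv; fun_prop

lemma hasDerivAt_binConv (p u : ℝ) : HasDerivAt (binConv p) (1 - 2 * p) u := by
  simpa [funext (binConv_eq p)] using ((hasDerivAt_id u).const_mul (1 - 2 * p)).const_add p

lemma self_le_binConv {p u : ℝ} (hp : 0 ≤ p) (hu : u ≤ 1 / 2) : u ≤ binConv p u := by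
  rw [binConv_eq]; nlinarith

lemma binConv_le_half {p u : ℝ} (hp : p ≤ 1 / 2) (hu : u ≤ 1 / 2) : binConv p u ≤ 1 / 2 := by
  rw [binConv_eq]; nlinarith

lemma log_one_sub_sub_log_le_of_le {x y : ℝ} (hx : 0 < x) (hxy : x ≤ y) (hy : y < 1) :
    log (1 - y) - log y ≤ log (1 - x) - log x := by
  have h₁ : log (1 - y) ≤ log (1 - x) := log_le_log (by linarith) (by linarith)
  have h₂ : log x ≤ log y := log_le_log hx hxy
  linarith

lemma log_one_sub_sub_log_nonneg {x : ℝ} (hx : 0 < x) (hx' : x ≤ 1 / 2) :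
    0 ≤ log (1 - x) - log x :=
  sub_nonneg.2 (log_le_log hx (by linarith))

theorem antitoneOn_binEntropy_binConv_sub_binEntropy {p : ℝ} (hp₀ : 0 ≤ p) (hp : p ≤ 1 / 2) :
    AntitoneOn (fun u ↦ binEntropy (binConv p u) - binEntropy u) (Icc 0 (1 / 2)) := by
  refine antitoneOn_of_hasDerivWithinAt_nonpos (convex_Icc _ _)
    (f' := fun u ↦
      (1 - 2 * p) * (log (1 - binConv p u) - log (binConv p u)) - (log (1 - u) - log u))
    ((binEntropy_continuous.comp (continuous_binConv p)).sub
      binEntropy_continuous).continuousOn (fun u hu ↦ ?_) (fun u hu ↦ ?_)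
  all_goals
    rw [interior_Icc] at hu
    obtain ⟨hu₀, hu₁⟩ := hu
    have hu_le : u ≤ binConv p u := self_le_binConv hp₀ hu₁.le
    have hw_le : binConv p u ≤ 1 / 2 := binConv_le_half hp hu₁.le
  · have hw := hasDerivAt_binEntropy (p := binConv p u) (by linarith) (by linarith)
    have hu := hasDerivAt_binEntropy (p := u) hu₀.ne' (by linarith)
    rw [mul_comm]
    exact ((hw.comp u (hasDerivAt_binConv p u)).sub hu).hasDerivWithinAt
  · rw [sub_nonpos]
    calc (1 - 2 * p) * (log (1 - binConv p u) - log (binConv p u))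
        ≤ log (1 - binConv p u) - log (binConv p u) :=
          mul_le_of_le_one_left (log_one_sub_sub_log_nonneg (by linarith) hw_le) (by linarith)
      _ ≤ log (1 - u) - log u := log_one_sub_sub_log_le_of_le hu₀ hu_le (by linarith)

/-- For 0 < p < 1/2 and 0 ≤ D₁ ≤ D₂ ≤ 1/2,
1 − h_b(D₂*p) + h_b(p*D₁) − h_b(D₁) ≥ 1 − h_b(D₂);
equivalently G(u) = h_b(p*u) − h_b(u) is non-increasing on [0,1/2]. -/
theorem G_antitone (p : ℝ) (hp0 : 0 < p) (hp : p < 1 / 2)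
    (D₁ D₂ : ℝ) (h0 : 0 ≤ D₁) (h12 : D₁ ≤ D₂) (h2 : D₂ ≤ 1 / 2) :
    1 - binEnt (binConv D₂ p) + binEnt (binConv p D₁) - binEnt D₁
      ≥ 1 - binEnt D₂ := by
  have hG := antitoneOn_binEntropy_binConv_sub_binEntropy hp0.le hp.le
    ⟨h0, h12.trans h2⟩ ⟨h0.trans h12, h2⟩ h12
  rw [binConv_comm D₂, binEnt_eq_binEntropy]
  linarith
end

section
/- The binary entropy function h_b and binary convolution satisfy: for fixed p ∈ (0, 1/2), the function G(u) = h_b(p*u) − h_b(u) is convex and non-increasing on [0, 1/2], with G(1/2) = 0. -/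
/-!
With `c = p ∗ u`, the second derivative of `G` is `1/(u(1-u)) - (1-2p)²/(c(1-c))`, and the
identity `c(1-c) = p(1-p) + (1-2p)² u(1-u)` makes it nonnegative on `(0,1)`, so `G` is convex
on `[0,1]`. Since `h_b(1-x) = h_b(x)` and `p ∗ (1-u) = 1 - p ∗ u`, `G` is symmetric about `1/2`,
and a convex function symmetric about the midpoint of an interval decreases on its left half.
-/

open Real Set

theorem ConvexOn.antitoneOn_of_symm {f : ℝ → ℝ} {a b : ℝ} (hf : ConvexOn ℝ (Icc a b) f)
    (hsymm : ∀ x ∈ Icc a b, f (a + b - x) = f x) : AntitoneOn f (Icc a ((a + b) / 2)) := by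
  rintro x ⟨hax, hxm⟩ y ⟨-, hym⟩ hxy
  have hx : x ∈ Icc a b := ⟨hax, by linarith⟩
  have hx' : a + b - x ∈ Icc a b := ⟨by linarith, by linarith⟩
  have hy : y ∈ segment ℝ x (a + b - x) := by
    rw [segment_eq_Icc (by linarith)]
    exact ⟨hxy, by linarith⟩
  calc f y ≤ max (f x) (f (a + b - x)) := hf.le_on_segment hx hx' hy
    _ = f x := by rw [hsymm x hx, max_self]

lemma hasDerivAt_log_one_sub_sub_log {x : ℝ} (hx₀ : x ≠ 0) (hx₁ : x ≠ 1) :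
    HasDerivAt (fun x => log (1 - x) - log x) (-(x * (1 - x))⁻¹) x := by
  have hx₁' : 1 - x ≠ 0 := sub_ne_zero.2 hx₁.symm
  refine (((hasDerivAt_log hx₁').comp x ((hasDerivAt_id x).const_sub 1)).sub
    (hasDerivAt_log hx₀)).congr_deriv ?_
  field_simp
  ring

lemma binConv_one_sub (p u : ℝ) : binConv p (1 - u) = 1 - binConv p u := by
  unfold binConv; ring

lemma binConv_mul_one_sub (p u : ℝ) :
    binConv p u * (1 - binConv p u) = p * (1 - p) + (1 - 2 * p) ^ 2 * (u * (1 - u)) := by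
  unfold binConv; ring

lemma binConv_mem_Ioo {p u : ℝ} (hp : p ∈ Ioo 0 1) (hu : u ∈ Ioo 0 1) :
    binConv p u ∈ Ioo 0 1 := by
  obtain ⟨hp₀, hp₁⟩ := hp
  obtain ⟨hu₀, hu₁⟩ := hu
  unfold binConv
  constructor <;> nlinarith [mul_pos hp₀ hu₀, mul_pos (sub_pos.2 hp₁) (sub_pos.2 hu₁)]

noncomputable def wynerZivG (p u : ℝ) : ℝ := binEnt (binConv p u) - binEnt u

lemma wynerZivG_one_sub (p u : ℝ) : wynerZivG p (1 - u) = wynerZivG p u := by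
  simp only [wynerZivG, binConv_one_sub, binEnt_eq_binEntropy, binEntropy_one_sub]

lemma wynerZivG_half (p : ℝ) : wynerZivG p (1 / 2) = 0 := by
  have h : binConv p (1 / 2) = 1 / 2 := by unfold binConv; ring
  rw [wynerZivG, h, sub_self]

lemma continuous_wynerZivG (p : ℝ) : Continuous (wynerZivG p) := by
  unfold wynerZivG binConv
  rw [binEnt_eq_binEntropy]
  fun_prop

noncomputable def derivWynerZivG (p u : ℝ) : ℝ :=
  (1 - 2 * p) * (log (1 - binConv p u) - log (binConv p u)) - (log (1 - u) - log u)

section Derivatives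

variable {p u : ℝ}

lemma hasDerivAt_wynerZivG (hp : p ∈ Ioo 0 1) (hu : u ∈ Ioo 0 1) :
    HasDerivAt (wynerZivG p) (derivWynerZivG p u) u := by
  obtain ⟨hc₀, hc₁⟩ := binConv_mem_Ioo hp hu
  have hc := (hasDerivAt_binEntropy hc₀.ne' hc₁.ne).comp u (hasDerivAt_binConv p u)
  have hG := hc.sub (hasDerivAt_binEntropy hu.1.ne' hu.2.ne)
  rw [derivWynerZivG, mul_comm]
  show HasDerivAt (fun u => binEnt (binConv p u) - binEnt u) _ u
  rwa [binEnt_eq_binEntropy]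

lemma hasDerivAt_derivWynerZivG (hp : p ∈ Ioo 0 1) (hu : u ∈ Ioo 0 1) :
    HasDerivAt (derivWynerZivG p)
      ((u * (1 - u))⁻¹ - (1 - 2 * p) ^ 2 * (binConv p u * (1 - binConv p u))⁻¹) u := by
  obtain ⟨hc₀, hc₁⟩ := binConv_mem_Ioo hp hu
  have hc := (hasDerivAt_log_one_sub_sub_log hc₀.ne' hc₁.ne).comp u (hasDerivAt_binConv p u)
  refine ((hc.const_mul (1 - 2 * p)).sub
    (hasDerivAt_log_one_sub_sub_log hu.1.ne' hu.2.ne)).congr_deriv ?_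
  ring

lemma deriv2_wynerZivG_nonneg (hp : p ∈ Ioo 0 1) (hu : u ∈ Ioo 0 1) :
    0 ≤ (u * (1 - u))⁻¹ - (1 - 2 * p) ^ 2 * (binConv p u * (1 - binConv p u))⁻¹ := by
  have hpp : 0 < p * (1 - p) := mul_pos hp.1 (sub_pos.2 hp.2)
  have huu : 0 < u * (1 - u) := mul_pos hu.1 (sub_pos.2 hu.2)
  rw [binConv_mul_one_sub, sub_nonneg, ← div_eq_mul_inv, inv_eq_one_div,
    div_le_div_iff₀ (by positivity) huu]
  nlinarith

end Derivatives

theorem convexOn_wynerZivG {p : ℝ} (hp : p ∈ Ioo 0 1) : ConvexOn ℝ (Icc 0 1) (wynerZivG p) :=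
  convexOn_of_hasDerivWithinAt2_nonneg (convex_Icc 0 1) (continuous_wynerZivG p).continuousOn
    (fun _ hu => (hasDerivAt_wynerZivG hp (by rwa [interior_Icc] at hu)).hasDerivWithinAt)
    (fun _ hu => (hasDerivAt_derivWynerZivG hp (by rwa [interior_Icc] at hu)).hasDerivWithinAt)
    (fun _ hu => deriv2_wynerZivG_nonneg hp (by rwa [interior_Icc] at hu))

/-- For fixed p ∈ (0,1/2), G(u) = h_b(p*u) − h_b(u) is convex and
non-increasing on [0,1/2], with G(1/2) = 0. -/
theorem G_convex_antitone_zero (p : ℝ) (hp0 : 0 < p) (hp : p < 1 / 2) :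
    ConvexOn ℝ (Set.Icc (0 : ℝ) (1 / 2)) (fun u => binEnt (binConv p u) - binEnt u) ∧
    AntitoneOn (fun u => binEnt (binConv p u) - binEnt u) (Set.Icc (0 : ℝ) (1 / 2)) ∧
    binEnt (binConv p (1 / 2)) - binEnt (1 / 2) = 0 := by
  have hconv := convexOn_wynerZivG (p := p) ⟨hp0, by linarith⟩
  have hanti : AntitoneOn (wynerZivG p) (Icc 0 (1 / 2)) := by
    simpa using hconv.antitoneOn_of_symm fun u _ => by simpa using wynerZivG_one_sub p u
  exact ⟨hconv.subset (Icc_subset_Icc_right (by norm_num)) (convex_Icc _ _), hanti,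
    wynerZivG_half p⟩
end
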